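/- For all real $x > 1$, $\frac{8\pi (x-1)\, \Psi(\tfrac{1}{2}x)\, \Psi(2x) + 2\,\vartheta_2(0, 2ix)^2}{\vartheta_3(\tfrac{\pi}{2}, \tfrac{i}{2}x)^2} < 1$, where $\Psi(x) = \sum_{k=1}^{\infty} k e^{-\pi x k^2}$. -/

import Mathlib

/-!
Put `q = e^{-πx/2} = b u` with `b = e^{-π/2}`, `u = e^{-t}`, `t = π(x-1)/2`. In `q`-series the
claim reads `16 t ψ(q) ψ(q⁴) + 2 θ₂(q)² < θ₄(q)²`. Jacobi's transformation formula gives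
`θ₄(b) = √2 θ₂(b)`, so the right side minus `2 θ₂(q)²` factors as
`(θ₄(q) - √2 θ₂(q)) (θ₄(q) + √2 θ₂(q))`. Going down from `b` to `q`, `θ₂` decreases while `θ₄`
increases by a fixed multiple of `b - q` (its leading term `-2q` dominates the rest), so the first
factor is `≳ b - q = b (1 - u) ≥ t q`, while the second is bounded below. The left side is
`O(t q⁵)`, and `q ≤ e^{-π/2} < 2/9` is small enough to compare the constants.
-/

open Real Function

namespace KeyEstimate

noncomputable def psi (q : ℝ) : ℝ := ∑' k : ℕ, ((k : ℝ) + 1) * q ^ ((k + 1) ^ 2)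

/-- The classical `θ₂` in the nome `q⁴`: `∑_{n ∈ ℤ} q ^ (2n+1)²`. -/
noncomputable def theta2 (q : ℝ) : ℝ := 2 * ∑' k : ℕ, q ^ ((2 * k + 1) ^ 2)

noncomputable def theta4 (q : ℝ) : ℝ := 1 + 2 * ∑' k : ℕ, (-1) ^ (k + 1) * q ^ ((k + 1) ^ 2)

variable {q : ℝ}

lemma summable_pow_comp (hq0 : 0 ≤ q) (hq1 : q < 1) {e : ℕ → ℕ} (he : ∀ k, k ≤ e k) :
    Summable fun k ↦ q ^ e k :=
  (summable_geometric_of_lt_one hq0 hq1).of_nonneg_of_le (fun _ ↦ pow_nonneg hq0 _)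
    fun k ↦ pow_le_pow_of_le_one hq0 hq1.le (he k)

lemma summable_neg_one_pow_mul_pow_comp (hq0 : 0 ≤ q) (hq1 : q < 1) {e : ℕ → ℕ}
    (he : ∀ k, k ≤ e k) : Summable fun k ↦ (-1 : ℝ) ^ (k + 1) * q ^ e k :=
  (summable_pow_comp hq0 hq1 he).of_norm_bounded fun k ↦ by
    rw [norm_mul, norm_pow, norm_neg, norm_one, one_pow, one_mul, norm_of_nonneg (pow_nonneg hq0 _)]

lemma summable_of_le_mul_coe_mul_pow_comp (hq0 : 0 ≤ q) (hq1 : q < 1) {c : ℝ} {f : ℕ → ℝ}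
    {e : ℕ → ℕ} (he : Injective e) (hf0 : ∀ k, 0 ≤ f k) (hf : ∀ k, f k ≤ c * (e k * q ^ e k)) :
    Summable f := by
  have hg : Summable fun n : ℕ ↦ c * (n * q ^ n) :=
    (summable_pow_mul_geometric_of_norm_lt_one 1 (by rwa [norm_of_nonneg hq0])).mul_left c |>.congr
      fun n ↦ by rw [pow_one]
  exact (hg.comp_injective he).of_nonneg_of_le hf0 hf

lemma tsum_le_of_le_mul_coe_mul_pow_comp (hq0 : 0 ≤ q) (hq1 : q < 1) {c : ℝ} (hc : 0 ≤ c)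
    {f : ℕ → ℝ} {e : ℕ → ℕ} (he : Injective e) (hf0 : ∀ k, 0 ≤ f k)
    (hf : ∀ k, f k ≤ c * (e k * q ^ e k)) : ∑' k, f k ≤ c * (q / (1 - q) ^ 2) :=
  hasSum_le_inj e he (fun n _ ↦ by positivity) hf
    (summable_of_le_mul_coe_mul_pow_comp hq0 hq1 he hf0 hf).hasSum
    ((hasSum_coe_mul_geometric_of_norm_lt_one (by rwa [norm_of_nonneg hq0])).mul_left c)

lemma psi_nonneg (hq0 : 0 ≤ q) : 0 ≤ psi q :=
  tsum_nonneg fun k ↦ by positivity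

lemma psi_le (hq0 : 0 ≤ q) (hq1 : q < 1) : psi q ≤ q / (1 - q) ^ 2 := by
  refine (tsum_le_of_le_mul_coe_mul_pow_comp hq0 hq1 zero_le_one (add_left_injective 1)
    (fun k ↦ by positivity) fun k ↦ ?_).trans_eq (one_mul _)
  rw [one_mul]
  push_cast
  exact mul_le_mul_of_nonneg_left
    (pow_le_pow_of_le_one hq0 hq1.le (Nat.le_self_pow two_ne_zero _)) (by positivity)

lemma one_sub_two_mul_div_le_theta4 (hq0 : 0 ≤ q) (hq1 : q < 1) :
    1 - 2 * (q / (1 - q)) ≤ theta4 q := by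
  have hmaj : HasSum (fun k : ℕ ↦ -(q * q ^ k)) (-(q / (1 - q))) :=
    ((hasSum_geometric_of_lt_one hq0 hq1).mul_left q).neg
  have hsum : Summable fun k : ℕ ↦ (-1 : ℝ) ^ (k + 1) * q ^ ((k + 1) ^ 2) :=
    summable_neg_one_pow_mul_pow_comp hq0 hq1 fun k ↦ by nlinarith
  have hle : -(q / (1 - q)) ≤ ∑' k : ℕ, (-1 : ℝ) ^ (k + 1) * q ^ ((k + 1) ^ 2) := by
    refine hasSum_le (fun k ↦ ?_) hmaj hsum.hasSum
    have h := pow_le_pow_of_le_one hq0 hq1.le (Nat.le_self_pow two_ne_zero (k + 1))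
    rw [← pow_succ']
    rcases neg_one_pow_eq_or ℝ (k + 1) with h1 | h1 <;> rw [h1] <;>
      linarith [pow_nonneg hq0 (k + 1), pow_nonneg hq0 ((k + 1) ^ 2)]
  unfold theta4
  linarith

lemma theta2_mono {q b : ℝ} (hq0 : 0 ≤ q) (hqb : q ≤ b) (hb1 : b < 1) : theta2 q ≤ theta2 b := by
  have he : ∀ k, k ≤ (2 * k + 1) ^ 2 := fun k ↦ by nlinarith
  unfold theta2
  gcongr 2 * ?_
  exact (summable_pow_comp hq0 (hqb.trans_lt hb1) he).tsum_le_tsum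
    (fun k ↦ pow_le_pow_left₀ hq0 hqb _) (summable_pow_comp (hq0.trans hqb) hb1 he)

lemma one_sub_pow_le_mul {u : ℝ} (hu : -1 ≤ u) (n : ℕ) : 1 - u ^ n ≤ n * (1 - u) := by
  have := one_add_mul_le_pow (a := u - 1) (by linarith) n
  rw [add_sub_cancel] at this
  linarith

lemma two_mul_mul_le_theta4_sub {b u : ℝ} (hb0 : 0 ≤ b) (hb1 : b < 1) (hu0 : 0 ≤ u) (hu1 : u ≤ 1) :
    2 * (b * (1 - u)) * (2 - 1 / (1 - b) ^ 2) ≤ theta4 (b * u) - theta4 b := by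
  set d : ℕ → ℝ := fun k ↦ b ^ ((k + 1) ^ 2) - (b * u) ^ ((k + 1) ^ 2) with hd_def
  have hbu : b * u ≤ b := mul_le_of_le_one_right hb0 hu1
  have hd0 : ∀ k, 0 ≤ d k := fun k ↦ sub_nonneg.2 (pow_le_pow_left₀ (by positivity) hbu _)
  have hd : ∀ k, d k ≤ (1 - u) * (((k + 1) ^ 2 : ℕ) * b ^ ((k + 1) ^ 2)) := fun k ↦ by
    have := mul_le_mul_of_nonneg_left (one_sub_pow_le_mul (by linarith) ((k + 1) ^ 2))
      (pow_nonneg hb0 ((k + 1) ^ 2))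
    simp only [d, mul_pow]
    linarith
  have hinj : Injective fun k : ℕ ↦ (k + 1) ^ 2 :=
    (Nat.pow_left_injective two_ne_zero).comp (add_left_injective 1)
  have hds : Summable d := summable_of_le_mul_coe_mul_pow_comp hb0 hb1 hinj hd0 hd
  have hsum_d : ∑' k, d k ≤ (1 - u) * (b / (1 - b) ^ 2) :=
    tsum_le_of_le_mul_coe_mul_pow_comp hb0 hb1 (by linarith) hinj hd0 hd
  have hsigned : Summable fun k ↦ (-1 : ℝ) ^ k * d k :=
    hds.of_norm_bounded fun k ↦ by
      rw [norm_mul, norm_pow, norm_neg, norm_one, one_pow, one_mul, norm_of_nonneg (hd0 k)]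
  have hdiff : theta4 (b * u) - theta4 b = 2 * ∑' k, (-1 : ℝ) ^ k * d k := by
    have he : ∀ k, k ≤ (k + 1) ^ 2 := fun k ↦ by nlinarith
    rw [theta4, theta4, add_sub_add_left_eq_sub, ← mul_sub,
      ← (summable_neg_one_pow_mul_pow_comp (by positivity) (hbu.trans_lt hb1) he).tsum_sub
        (summable_neg_one_pow_mul_pow_comp hb0 hb1 he)]
    congr 1
    exact tsum_congr fun k ↦ by rw [hd_def, pow_succ]; ring
  -- an alternating sum of nonnegative terms is at least its first term minus all the others
  have hfirst : 2 * d 0 ≤ ∑' k, ((-1 : ℝ) ^ k * d k + d k) := by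
    refine ((hsigned.add hds).le_tsum 0 fun k _ ↦ ?_).trans_eq' (by ring)
    rcases neg_one_pow_eq_or ℝ k with h | h <;> rw [h] <;> linarith [hd0 k]
  rw [hsigned.tsum_add hds] at hfirst
  have hd_zero : d 0 = b * (1 - u) := by rw [hd_def]; ring
  rw [hdiff]
  have : 2 * (b * (1 - u)) * (2 - 1 / (1 - b) ^ 2)
      = 2 * (2 * d 0 - (1 - u) * (b / (1 - b) ^ 2)) := by rw [hd_zero]; ring
  linarith

lemma theta2_nonneg (hq0 : 0 ≤ q) : 0 ≤ theta2 q :=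
  mul_nonneg zero_le_two (tsum_nonneg fun _ ↦ pow_nonneg hq0 _)

lemma psi_le_five_thirds_mul (hq0 : 0 ≤ q) (hq : q ≤ 2 / 9) : psi q ≤ 5 / 3 * q := by
  refine (psi_le hq0 (by linarith)).trans ?_
  have h : 3 / 5 ≤ (1 - q) ^ 2 := by nlinarith
  rw [div_le_iff₀ (by linarith)]
  nlinarith [mul_le_mul_of_nonneg_left h hq0]

lemma two_fifths_le_theta4 (hq0 : 0 ≤ q) (hq : q ≤ 2 / 9) : 2 / 5 ≤ theta4 q := by
  refine le_trans ?_ (one_sub_two_mul_div_le_theta4 hq0 (by linarith))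
  have : q / (1 - q) ≤ 2 / 7 := by rw [div_le_iff₀ (by linarith)]; linarith
  linarith

lemma exp_neg_pi_div_two_le : exp (-π / 2) ≤ 2 / 9 := by
  have htaylor : (9 / 2 : ℝ) ≤ ∑ i ∈ Finset.range 5, (1.57 : ℝ) ^ i / i.factorial := by
    norm_num [Finset.sum_range_succ, Nat.factorial]
  have hexp : (9 / 2 : ℝ) ≤ exp (π / 2) :=
    htaylor.trans <| (sum_le_exp_of_nonneg (by norm_num) 5).trans <|
      exp_le_exp.2 (by linarith [pi_gt_d2])
  rw [neg_div, exp_neg, inv_le_comm₀ (exp_pos _) (by norm_num)]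
  linarith

lemma tsum_mul_exp_eq_psi (s : ℝ) :
    ∑' k : ℕ, ((k : ℝ) + 1) * exp (-π * s * ((k : ℝ) + 1) ^ 2) = psi (exp (-π * s)) :=
  tsum_congr fun k ↦ by rw [← exp_nat_mul]; push_cast; ring_nf

lemma tsum_exp_eq_theta2 {x : ℝ} (hx : 0 < x) :
    ∑' n : ℤ, exp (-2 * π * x * ((n : ℝ) + 1 / 2) ^ 2) = theta2 (exp (-π * x / 2)) := by
  have hterm : ∀ k : ℕ, exp (-2 * π * x * ((k : ℝ) + 1 / 2) ^ 2)
      = exp (-π * x / 2) ^ ((2 * k + 1) ^ 2) := fun k ↦ by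
    rw [← exp_nat_mul]; push_cast; ring_nf
  have hterm' : ∀ k : ℕ, exp (-2 * π * x * (((-(k + 1) : ℤ) : ℝ) + 1 / 2) ^ 2)
      = exp (-π * x / 2) ^ ((2 * k + 1) ^ 2) := fun k ↦ by
    rw [← exp_nat_mul]; push_cast; ring_nf
  have hsum : Summable fun k : ℕ ↦ exp (-π * x / 2) ^ ((2 * k + 1) ^ 2) :=
    summable_pow_comp (exp_pos _).le (exp_lt_one_iff.2 (by nlinarith [pi_pos])) fun k ↦ by nlinarith
  rw [tsum_of_nat_of_neg_add_one (by simpa only [Int.cast_natCast, hterm] using hsum)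
    (by simpa only [hterm'] using hsum)]
  simp only [Int.cast_natCast, hterm, hterm', theta2]
  ring

lemma tsum_neg_one_zpow_mul_exp_eq_theta4 {x : ℝ} (hx : 0 < x) :
    ∑' n : ℤ, (-1 : ℝ) ^ n * exp (-π * x * (n : ℝ) ^ 2 / 2) = theta4 (exp (-π * x / 2)) := by
  have hterm : ∀ k : ℕ, (-1 : ℝ) ^ ((k : ℤ) + 1) * exp (-π * x * (((k : ℤ) + 1 : ℤ) : ℝ) ^ 2 / 2)
      = (-1) ^ (k + 1) * exp (-π * x / 2) ^ ((k + 1) ^ 2) := fun k ↦ by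
    rw [← exp_nat_mul]; norm_cast; push_cast; ring_nf
  have hterm' : ∀ k : ℕ, (-1 : ℝ) ^ (-((k : ℤ) + 1)) * exp (-π * x * ((-((k : ℤ) + 1) : ℤ) : ℝ) ^ 2 / 2)
      = (-1) ^ (k + 1) * exp (-π * x / 2) ^ ((k + 1) ^ 2) := fun k ↦ by
    rw [← inv_zpow', inv_neg_one, ← exp_nat_mul]; norm_cast; push_cast; ring_nf
  have hsum : Summable fun k : ℕ ↦ (-1 : ℝ) ^ (k + 1) * exp (-π * x / 2) ^ ((k + 1) ^ 2) :=
    summable_neg_one_pow_mul_pow_comp (exp_pos _).le (exp_lt_one_iff.2 (by nlinarith [pi_pos]))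
      fun k ↦ by nlinarith
  rw [tsum_of_add_one_of_neg_add_one (by simpa only [hterm] using hsum)
    (by simpa only [hterm'] using hsum)]
  simp only [hterm, hterm', theta4]
  norm_num
  ring

open Complex in
lemma sqrt_two_mul_tsum_exp_eq_tsum_neg_one_zpow_mul_exp :
    √2 * ∑' n : ℤ, Real.exp (-2 * π * ((n : ℝ) + 1 / 2) ^ 2)
      = ∑' n : ℤ, (-1 : ℝ) ^ n * Real.exp (-π * (n : ℝ) ^ 2 / 2) := by
  set S2 := ∑' n : ℤ, Real.exp (-2 * π * ((n : ℝ) + 1 / 2) ^ 2)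
  set S4 := ∑' n : ℤ, (-1 : ℝ) ^ n * Real.exp (-π * (n : ℝ) ^ 2 / 2)
  have hl : jacobiTheta₂ I (2 * I) = ↑(Real.exp (π / 2) * S2) := by
    rw [ofReal_mul, ofReal_tsum, ← tsum_mul_left]
    refine tsum_congr fun n ↦ ?_
    rw [jacobiTheta₂_term, ofReal_exp, ofReal_exp, ← Complex.exp_add]
    congr 1
    push_cast
    linear_combination (2 * (π : ℂ) * n ^ 2 + 2 * π * n) * I_sq
  have hr : jacobiTheta₂ (I / (2 * I)) (-1 / (2 * I)) = ↑S4 := by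
    rw [ofReal_tsum]
    refine tsum_congr fun n ↦ ?_
    have h1 : I / (2 * I) = 1 / 2 := by field_simp
    have h2 : -1 / (2 * I) = I / 2 := by field_simp; linear_combination -I_sq
    rw [jacobiTheta₂_term, h1, h2, show 2 * (π : ℂ) * I * n * (1 / 2) + π * I * n ^ 2 * (I / 2)
      = n * (π * I) + ((-π * (n : ℝ) ^ 2 / 2 : ℝ) : ℂ) by
        push_cast; linear_combination (π * n ^ 2 / 2 : ℂ) * I_sq,
      Complex.exp_add, Complex.exp_int_mul, Complex.exp_pi_mul_I, ← ofReal_exp]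
    push_cast
    ring
  have hs : (-I * (2 * I)) ^ (1 / 2 : ℂ) = ↑(√2) := by
    rw [show -I * (2 * I) = ((2 : ℝ) : ℂ) by push_cast; linear_combination -2 * I_sq,
      show (1 / 2 : ℂ) = ((1 / 2 : ℝ) : ℂ) by push_cast; ring, ← ofReal_cpow zero_le_two,
      Real.sqrt_eq_rpow]
  have he : cexp (-π * I * I ^ 2 / (2 * I)) = ↑(Real.exp (π / 2)) := by
    rw [ofReal_exp]; congr 1; field_simp; push_cast; ring_nf; rw [I_sq]; ring
  have h := jacobiTheta₂_functional_equation I (2 * I)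
  rw [hl, hr, hs, he] at h
  have h' : Real.exp (π / 2) * S2 = Real.exp (π / 2) * (S4 / √2) := by
    apply ofReal_injective
    rw [h, ofReal_mul, ofReal_div]
    ring
  rw [mul_left_cancel₀ (Real.exp_pos _).ne' h', mul_div_cancel₀ _ (by positivity)]

lemma theta4_exp_neg_pi_div_two : theta4 (exp (-π / 2)) = √2 * theta2 (exp (-π / 2)) := by
  have h2 := tsum_exp_eq_theta2 one_pos
  have h4 := tsum_neg_one_zpow_mul_exp_eq_theta4 one_pos
  simp only [mul_one] at h2 h4
  rw [← h2, ← h4, sqrt_two_mul_tsum_exp_eq_tsum_neg_one_zpow_mul_exp]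

lemma mul_exp_neg_le_one_sub_exp_neg (t : ℝ) : t * exp (-t) ≤ 1 - exp (-t) := by
  have := mul_le_mul_of_nonneg_right (add_one_le_exp t) (exp_pos (-t)).le
  rw [← exp_add, add_neg_cancel, exp_zero, add_one_mul] at this
  linarith

lemma mul_le_theta4_sq_sub_two_mul_theta2_sq {b u : ℝ} (hb0 : 0 ≤ b) (hb : b ≤ 2 / 9)
    (hmod : theta4 b = √2 * theta2 b) (hu0 : 0 ≤ u) (hu1 : u ≤ 1) :
    4 / 15 * (b * (1 - u)) ≤ theta4 (b * u) ^ 2 - 2 * theta2 (b * u) ^ 2 := by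
  have hbu0 : 0 ≤ b * u := by positivity
  have hbu : b * u ≤ b := mul_le_of_le_one_right hb0 hu1
  have hw : 0 ≤ b * (1 - u) := mul_nonneg hb0 (by linarith)
  have hinv : 1 / (1 - b) ^ 2 ≤ 5 / 3 := by
    rw [div_le_iff₀ (by nlinarith)]
    nlinarith
  have hsub := two_mul_mul_le_theta4_sub hb0 (by linarith) hu0 hu1
  have hmono := mul_le_mul_of_nonneg_left (theta2_mono hbu0 hbu (by linarith)) (sqrt_nonneg 2)
  have hminus : 2 / 3 * (b * (1 - u)) ≤ theta4 (b * u) - √2 * theta2 (b * u) := by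
    nlinarith
  have hplus : 2 / 5 ≤ theta4 (b * u) + √2 * theta2 (b * u) := by
    linarith [two_fifths_le_theta4 hbu0 (hbu.trans hb),
      mul_nonneg (sqrt_nonneg 2) (theta2_nonneg hbu0)]
  have hfactor : theta4 (b * u) ^ 2 - 2 * theta2 (b * u) ^ 2
      = (theta4 (b * u) - √2 * theta2 (b * u)) * (theta4 (b * u) + √2 * theta2 (b * u)) := by
    linear_combination theta2 (b * u) ^ 2 * sq_sqrt (zero_le_two : (0 : ℝ) ≤ 2)
  rw [hfactor]
  calc 4 / 15 * (b * (1 - u)) = 2 / 3 * (b * (1 - u)) * (2 / 5) := by ring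
    _ ≤ _ := mul_le_mul hminus hplus (by norm_num) (by linarith)

lemma mul_psi_mul_psi_add_two_mul_theta2_sq_lt_theta4_sq {b u t : ℝ} (hb0 : 0 < b)
    (hb : b ≤ 2 / 9) (hmod : theta4 b = √2 * theta2 b) (hu0 : 0 < u) (ht : 0 < t)
    (htu : t * u ≤ 1 - u) :
    16 * t * psi (b * u) * psi ((b * u) ^ 4) + 2 * theta2 (b * u) ^ 2 < theta4 (b * u) ^ 2 := by
  have hu1 : u < 1 := by nlinarith
  have hq0 : 0 < b * u := by positivity
  have hq : b * u ≤ 2 / 9 := (mul_le_of_le_one_right hb0.le hu1.le).trans hb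
  have hq4 : (b * u) ^ 4 ≤ (2 / 9) ^ 4 := pow_le_pow_left₀ hq0.le hq 4
  have hlow := mul_le_theta4_sq_sub_two_mul_theta2_sq hb0.le hb hmod hu0.le hu1.le
  have hpsi := psi_le_five_thirds_mul hq0.le hq
  have hpsi4 := psi_le_five_thirds_mul (by positivity) (hq4.trans (by norm_num))
  have hpsi_prod : psi (b * u) * psi ((b * u) ^ 4) ≤ 5 / 3 * (b * u) * (5 / 3 * (2 / 9) ^ 4) :=
    mul_le_mul hpsi (hpsi4.trans (by gcongr)) (psi_nonneg (by positivity)) (by positivity)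
  have htq : t * (b * u) ≤ b * (1 - u) := by nlinarith
  nlinarith [mul_le_mul_of_nonneg_left hpsi_prod ht.le, mul_pos ht hq0]

end KeyEstimate

open KeyEstimate in
theorem key_estimate (x : ℝ) (hx : 1 < x) :
    (8 * Real.pi * (x - 1)
        * (∑' k : ℕ, ((k : ℝ) + 1) * Real.exp (-Real.pi * (x/2) * ((k : ℝ) + 1)^2))
        * (∑' k : ℕ, ((k : ℝ) + 1) * Real.exp (-Real.pi * (2*x) * ((k : ℝ) + 1)^2))
      + 2 * (∑' n : ℤ, Real.exp (-2 * Real.pi * x * ((n : ℝ) + 1/2)^2))^2)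
      / (∑' n : ℤ, (-1 : ℝ)^(n : ℤ) * Real.exp (-Real.pi * x * (n : ℝ)^2 / 2))^2
    < 1 := by
  have hx0 : 0 < x := by linarith
  set t := π / 2 * (x - 1) with ht_def
  have ht : 0 < t := by have := pi_pos; positivity
  have hb := exp_neg_pi_div_two_le
  have hq_le : exp (-π / 2) * exp (-t) ≤ 2 / 9 :=
    (mul_le_of_le_one_right (exp_pos _).le (exp_le_one_iff.2 (by linarith))).trans hb
  have hq : exp (-π * x / 2) = exp (-π / 2) * exp (-t) := by
    rw [← exp_add, ht_def]; ring_nf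
  have hq_half : exp (-π * (x / 2)) = exp (-π / 2) * exp (-t) := by
    rw [← hq]; ring_nf
  have hq_four : exp (-π * (2 * x)) = (exp (-π / 2) * exp (-t)) ^ 4 := by
    rw [← hq, ← exp_nat_mul]; ring_nf
  rw [tsum_mul_exp_eq_psi, tsum_mul_exp_eq_psi, tsum_exp_eq_theta2 hx0,
    tsum_neg_one_zpow_mul_exp_eq_theta4 hx0, hq, hq_half, hq_four,
    div_lt_one (pow_pos ((two_fifths_le_theta4 (by positivity) hq_le).trans_lt' (by norm_num)) 2),
    show 8 * π * (x - 1) = 16 * t by rw [ht_def]; ring]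
  exact mul_psi_mul_psi_add_two_mul_theta2_sq_lt_theta4_sq (exp_pos _) hb
    theta4_exp_neg_pi_div_two (exp_pos _) ht (mul_exp_neg_le_one_sub_exp_neg t)
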